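/- arXiv:2401.14653 — 2 statements merged into one kernel-verified Lean document; each statement's English description precedes it below -/
import Mathlib

section
/- For every even integer n ≥ 8, the path P_n on n vertices satisfies 4 ≤ χ_lt(P_n) ≤ 5. -/
/-!
Lower bound: in a local total antimagic labeling of `P_n`, any three consecutive terms of the
sequence `v₀, v₀v₁, v₁, v₁v₂, v₂, …` are pairwise adjacent or incident, so they get distinct
weights. With at most three weights the sequence is therefore 3-periodic, whence
`w(v_{i+3}) = w(v_i)`. Writing `g_i` for the label of `v_iv_{i+1}`, the equations
`w(v₀) = w(v₃)`, `w(v₁) = w(v₄)`, `w(v₂) = w(v₅)` read `g₀ = g₂ + g₃`, `g₀ + g₁ = g₃ + g₄` and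
`g₁ + g₂ = g₄ + g₅`, forcing `g₅ = 0`.

Upper bound: label `v_i` by `n + i/2` for even `i` and `2n - (i+1)/2` for odd `i`, and the edge
`v_iv_{i+1}` by `i + 1` for even `i` and `n - 1 - i` for odd `i`. The vertices get `n, …, 2n - 1`,
the edges `1, …, n - 1`; the vertex weights are `1, n - 1, n + 1` and the edge weights `3n - 1, 3n`.
-/

open scoped Classical

namespace LTA

variable {V : Type*} {W : Type*}

/-- The induced weight of an edge: the sum of the labels of its two endpoints. -/
noncomputable def eWeight (fV : V → ℕ) : Sym2 V → ℕ :=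
  Sym2.lift ⟨fun a b => fV a + fV b, fun a b => Nat.add_comm _ _⟩

/-- The induced weight of a vertex: the sum of the labels of its incident edges. -/
noncomputable def vWeight [Fintype V] (G : SimpleGraph V) (fE : Sym2 V → ℕ) (v : V) : ℕ :=
  ∑ e ∈ G.edgeFinset, if v ∈ e then fE e else 0

/-- A total labeling: the labels form a bijection from `V ∪ E` onto `{1, …, p + q}`. -/
def IsTotalLabeling [Fintype V] (G : SimpleGraph V) (fV : V → ℕ) (fE : Sym2 V → ℕ) : Prop :=
  Function.Injective (Sum.elim fV (fun e : G.edgeSet => fE e.1)) ∧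
    Set.range (Sum.elim fV (fun e : G.edgeSet => fE e.1)) =
      Set.Icc 1 (Fintype.card V + G.edgeFinset.card)

/-- A local total antimagic labeling. -/
def IsLocalTotalAntimagic [Fintype V] (G : SimpleGraph V) (fV : V → ℕ) (fE : Sym2 V → ℕ) :
    Prop :=
  IsTotalLabeling G fV fE ∧
    (∀ u v, G.Adj u v → vWeight G fE u ≠ vWeight G fE v) ∧
    (∀ e₁ ∈ G.edgeSet, ∀ e₂ ∈ G.edgeSet, e₁ ≠ e₂ → (∃ v, v ∈ e₁ ∧ v ∈ e₂) →
      eWeight fV e₁ ≠ eWeight fV e₂) ∧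
    (∀ v : V, ∀ e ∈ G.edgeSet, v ∈ e → vWeight G fE v ≠ eWeight fV e)

/-- The number of distinct induced weights of a total labeling. -/
noncomputable def weightCount [Fintype V] (G : SimpleGraph V) (fV : V → ℕ)
    (fE : Sym2 V → ℕ) : ℕ :=
  (Finset.image (vWeight G fE) Finset.univ ∪ Finset.image (eWeight fV) G.edgeFinset).card

/-- The local total antimagic chromatic number `χ_lt`. -/
noncomputable def chiLT [Fintype V] (G : SimpleGraph V) : ℕ :=
  sInf {n | ∃ fV fE, IsLocalTotalAntimagic G fV fE ∧ weightCount G fV fE = n}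

/-- A pendant edge: an edge incident to a vertex of degree 1. -/
def IsPendantEdge [Fintype V] (G : SimpleGraph V) (e : Sym2 V) : Prop :=
  e ∈ G.edgeSet ∧ ∃ v ∈ e, G.degree v = 1

/-- The number of pendant edges of `G`. -/
noncomputable def pendantEdgeCount [Fintype V] (G : SimpleGraph V) : ℕ :=
  (G.edgeFinset.filter fun e => ∃ v ∈ e, G.degree v = 1).card

/-- A local antimagic (edge) labeling: a bijection from the edges onto `{1, …, q}` such that
adjacent vertices get distinct induced vertex weights. -/
def IsLocalAntimagic [Fintype V] (G : SimpleGraph V) (fE : Sym2 V → ℕ) : Prop :=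
  Set.InjOn fE G.edgeSet ∧ fE '' G.edgeSet = Set.Icc 1 G.edgeFinset.card ∧
    ∀ u v, G.Adj u v → vWeight G fE u ≠ vWeight G fE v

/-- The local antimagic chromatic number `χ_la`. -/
noncomputable def chiLA [Fintype V] (G : SimpleGraph V) : ℕ :=
  sInf {n | ∃ fE, IsLocalAntimagic G fE ∧ (Finset.image (vWeight G fE) Finset.univ).card = n}

/-- A local edge antimagic (vertex) labeling: a bijection from the vertices onto `{1, …, p}`
such that edges sharing an endpoint get distinct induced edge weights. -/
def IsLocalEdgeAntimagic [Fintype V] (G : SimpleGraph V) (fV : V → ℕ) : Prop :=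
  Function.Injective fV ∧ Set.range fV = Set.Icc 1 (Fintype.card V) ∧
    ∀ e₁ ∈ G.edgeSet, ∀ e₂ ∈ G.edgeSet, e₁ ≠ e₂ → (∃ v, v ∈ e₁ ∧ v ∈ e₂) →
      eWeight fV e₁ ≠ eWeight fV e₂

/-- The local edge antimagic chromatic number `χ_lea`. -/
noncomputable def chiLEA [Fintype V] (G : SimpleGraph V) : ℕ :=
  sInf {n | ∃ fV, IsLocalEdgeAntimagic G fV ∧ (Finset.image (eWeight fV) G.edgeFinset).card = n}

/-- The disjoint union of `m` copies of `G`. -/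
def copies (m : ℕ) (G : SimpleGraph V) : SimpleGraph (Fin m × V) where
  Adj x y := x.1 = y.1 ∧ G.Adj x.2 y.2
  symm := ⟨fun x y h => ⟨h.1.symm, h.2.symm⟩⟩
  loopless := ⟨fun x h => G.irrefl h.2⟩

/-- The graph obtained from `G` by attaching `s` pendant edges to the vertex `v`. -/
def attachPendants (G : SimpleGraph V) (v : V) (s : ℕ) : SimpleGraph (V ⊕ Fin s) :=
  SimpleGraph.fromRel (fun x y =>
    (∃ a b, G.Adj a b ∧ x = Sum.inl a ∧ y = Sum.inl b) ∨
    (∃ i : Fin s, x = Sum.inl v ∧ y = Sum.inr i))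

/-- The fan graph `f_n` (n triangles sharing a common vertex) with `k` pendant edges attached
to every degree-2 vertex: `f_n(k)`.  The common vertex is `Sum.inl none`, the outer vertices
are `Sum.inl (some w)`, and the pendant vertices are `Sum.inr (w, t)`. -/
def fanGraph (n k : ℕ) :
    SimpleGraph (Option (Fin n × Fin 2) ⊕ (Fin n × Fin 2) × Fin k) :=
  SimpleGraph.fromRel (fun x y =>
    (∃ w, x = Sum.inl none ∧ y = Sum.inl (some w)) ∨
    (∃ i : Fin n, x = Sum.inl (some (i, 0)) ∧ y = Sum.inl (some (i, 1))) ∨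
    (∃ w t, x = Sum.inl (some w) ∧ y = Sum.inr (w, t)))


open SimpleGraph Finset

section Labeling

variable [Fintype V] {G : SimpleGraph V}

lemma vWeight_eq_sum_neighborFinset (fE : Sym2 V → ℕ) (v : V) :
    vWeight G fE v = ∑ w ∈ G.neighborFinset v, fE s(v, w) := by
  have hinc : {e ∈ G.edgeFinset | v ∈ e} = (G.neighborFinset v).image (s(v, ·)) := by
    ext e
    induction e with | h a b => ?_
    simp only [mem_filter, mem_edgeFinset, mem_edgeSet, Sym2.mem_iff, mem_image,
      mem_neighborFinset]
    constructor
    · rintro ⟨hab, rfl | rfl⟩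
      · exact ⟨b, hab, rfl⟩
      · exact ⟨a, hab.symm, Sym2.eq_swap⟩
    · rintro ⟨w, hw, h⟩
      rcases Sym2.eq_iff.1 h with ⟨rfl, rfl⟩ | ⟨rfl, rfl⟩
      exacts [⟨hw, Or.inl rfl⟩, ⟨hw.symm, Or.inr rfl⟩]
  rw [vWeight, ← sum_filter, hinc, sum_image fun _ _ _ _ h => Sym2.congr_right.mp h]

lemma isTotalLabeling_of_injective_of_mem_Icc {fV : V → ℕ} {fE : Sym2 V → ℕ}
    (hinj : Function.Injective (Sum.elim fV fun e : G.edgeSet => fE e.1))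
    (hmem : ∀ x, Sum.elim fV (fun e : G.edgeSet => fE e.1) x ∈
      Set.Icc 1 (Fintype.card V + #G.edgeFinset)) :
    IsTotalLabeling G fV fE := by
  refine ⟨hinj,
    Set.eq_of_subset_of_ncard_le (Set.range_subset_iff.2 hmem) ?_ (Set.finite_Icc _ _)⟩
  rw [Set.ncard_range_of_injective hinj, Nat.card_sum, Nat.card_eq_fintype_card,
    Nat.card_eq_fintype_card, ← edgeFinset_card, Set.ncard_Icc_nat]
  omega

lemma IsTotalLabeling.one_le {fV : V → ℕ} {fE : Sym2 V → ℕ} (h : IsTotalLabeling G fV fE)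
    {e : Sym2 V} (he : e ∈ G.edgeSet) : 1 ≤ fE e :=
  (h.2.le ⟨Sum.inr ⟨e, he⟩, rfl⟩).1

lemma chiLT_le_weightCount {fV : V → ℕ} {fE : Sym2 V → ℕ}
    (h : IsLocalTotalAntimagic G fV fE) :
    chiLT G ≤ weightCount G fV fE :=
  Nat.sInf_le ⟨fV, fE, h, rfl⟩

lemma le_chiLT {k : ℕ} (hne : ∃ fV fE, IsLocalTotalAntimagic G fV fE)
    (hk : ∀ fV fE, IsLocalTotalAntimagic G fV fE → k ≤ weightCount G fV fE) :
    k ≤ chiLT G := by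
  obtain ⟨fV, fE, h⟩ := hne
  refine le_csInf ⟨_, fV, fE, h, rfl⟩ ?_
  rintro _ ⟨fV, fE, h, rfl⟩
  exact hk fV fE h

end Labeling

lemma eq_of_mem_of_card_le_three {α : Type*} {S : Finset α} (hS : #S ≤ 3) {a b c d : α}
    (ha : a ∈ S) (hb : b ∈ S) (hc : c ∈ S) (hd : d ∈ S)
    (hab : a ≠ b) (hac : a ≠ c) (hbc : b ≠ c) (hbd : b ≠ d) (hcd : c ≠ d) : d = a := by
  have hS' : {a, b, c} = S := eq_of_subset_of_card_le (by simp [insert_subset_iff, *])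
    (by rw [card_eq_three.2 ⟨a, b, c, hab, hac, hbc, rfl⟩]; exact hS)
  rw [← hS'] at hd
  simp only [mem_insert, mem_singleton] at hd
  grind

lemma add_three_eq_of_card_le_three {α : Type*} {S : Finset α} (hS : #S ≤ 3) {t : ℕ → α}
    {N : ℕ} (hmem : ∀ k < N, t k ∈ S)
    (hne : ∀ k, k + 2 < N → t k ≠ t (k + 1) ∧ t k ≠ t (k + 2) ∧ t (k + 1) ≠ t (k + 2))
    {k : ℕ} (hk : k + 3 < N) : t (k + 3) = t k :=
  eq_of_mem_of_card_le_three hS (hmem _ (by omega)) (hmem _ (by omega)) (hmem _ (by omega))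
    (hmem _ hk) (hne k (by omega)).1 (hne k (by omega)).2.1 (hne k (by omega)).2.2
    (hne (k + 1) hk).2.1 (hne (k + 1) hk).2.2

section PathGraph

variable {n : ℕ}

lemma mem_edgeSet_pathGraph {e : Sym2 (Fin n)} :
    e ∈ (pathGraph n).edgeSet ↔ ∃ a b : Fin n, a.1 + 1 = b.1 ∧ e = s(a, b) := by
  induction e with | h x y => ?_
  rw [mem_edgeSet, pathGraph_adj]
  constructor
  · rintro (h | h)
    · exact ⟨x, y, h, rfl⟩
    · exact ⟨y, x, h, Sym2.eq_swap⟩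
  · rintro ⟨a, b, hab, h⟩
    rcases Sym2.eq_iff.1 h with ⟨rfl, rfl⟩ | ⟨rfl, rfl⟩
    exacts [Or.inl hab, Or.inr hab]

lemma card_edgeFinset_pathGraph (n : ℕ) : #(pathGraph n).edgeFinset = n - 1 := by
  cases n with
  | zero =>
    rw [zero_tsub, card_eq_zero, edgeFinset_eq_empty]
    ext a
    exact a.elim0
  | succ m =>
    have hE : (pathGraph (m + 1)).edgeFinset =
        univ.image fun i : Fin m => s(i.castSucc, i.succ) := by
      ext e
      simp only [mem_edgeFinset, mem_edgeSet_pathGraph, mem_image, mem_univ, true_and]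
      constructor
      · rintro ⟨a, b, hab, rfl⟩
        refine ⟨⟨a.1, by omega⟩, ?_⟩
        simp [hab]
      · rintro ⟨i, rfl⟩
        exact ⟨_, _, by simp, rfl⟩
    rw [hE, card_image_of_injective, card_univ, Fintype.card_fin, Nat.add_sub_cancel]
    intro i j h
    rcases Sym2.eq_iff.1 h with ⟨h, -⟩ | ⟨h₁, h₂⟩
    · exact Fin.castSucc_injective _ h
    · simp only [Fin.ext_iff, Fin.val_castSucc, Fin.val_succ] at h₁ h₂
      omega

lemma pathGraph_neighborFinset_eq_pair {a b c : Fin n} (hab : a.1 + 1 = b.1)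
    (hbc : b.1 + 1 = c.1) : (pathGraph n).neighborFinset b = {a, c} := by
  ext x
  simp only [mem_neighborFinset, pathGraph_adj, mem_insert, mem_singleton, Fin.ext_iff]
  omega

lemma pathGraph_neighborFinset_eq_singleton_of_val_eq_zero {a b : Fin n} (ha : a.1 = 0)
    (hab : a.1 + 1 = b.1) : (pathGraph n).neighborFinset a = {b} := by
  ext x
  simp only [mem_neighborFinset, pathGraph_adj, mem_singleton, Fin.ext_iff]
  omega

lemma pathGraph_neighborFinset_eq_singleton_of_val_add_one_eq {a b : Fin n}
    (hab : a.1 + 1 = b.1) (hb : b.1 + 1 = n) : (pathGraph n).neighborFinset b = {a} := by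
  ext x
  simp only [mem_neighborFinset, pathGraph_adj, mem_singleton, Fin.ext_iff]
  omega

lemma vWeight_pathGraph_eq_add (fE : Sym2 (Fin n) → ℕ) {a b c : Fin n} (hab : a.1 + 1 = b.1)
    (hbc : b.1 + 1 = c.1) : vWeight (pathGraph n) fE b = fE s(a, b) + fE s(b, c) := by
  rw [vWeight_eq_sum_neighborFinset, pathGraph_neighborFinset_eq_pair hab hbc,
    sum_pair (by simp [Fin.ext_iff]; omega), Sym2.eq_swap]

lemma vWeight_pathGraph_of_val_eq_zero (fE : Sym2 (Fin n) → ℕ) {a b : Fin n} (ha : a.1 = 0)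
    (hab : a.1 + 1 = b.1) : vWeight (pathGraph n) fE a = fE s(a, b) := by
  rw [vWeight_eq_sum_neighborFinset, pathGraph_neighborFinset_eq_singleton_of_val_eq_zero ha hab,
    sum_singleton]

lemma vWeight_pathGraph_of_val_add_one_eq (fE : Sym2 (Fin n) → ℕ) {a b : Fin n}
    (hab : a.1 + 1 = b.1) (hb : b.1 + 1 = n) : vWeight (pathGraph n) fE b = fE s(a, b) := by
  rw [vWeight_eq_sum_neighborFinset,
    pathGraph_neighborFinset_eq_singleton_of_val_add_one_eq hab hb, sum_singleton, Sym2.eq_swap]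

end PathGraph

namespace IsLocalTotalAntimagic

variable [Fintype V] {G : SimpleGraph V} {fV : V → ℕ} {fE : Sym2 V → ℕ} {u v w : V}

lemma vWeight_ne_eWeight_left (h : IsLocalTotalAntimagic G fV fE) (huv : G.Adj u v) :
    vWeight G fE u ≠ eWeight fV s(u, v) :=
  h.2.2.2 u _ huv (Sym2.mem_mk_left u v)

lemma eWeight_ne_vWeight_right (h : IsLocalTotalAntimagic G fV fE) (huv : G.Adj u v) :
    eWeight fV s(u, v) ≠ vWeight G fE v :=
  (h.2.2.2 v _ huv (Sym2.mem_mk_right u v)).symm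

lemma eWeight_ne_of_adj_of_adj (h : IsLocalTotalAntimagic G fV fE) (huv : G.Adj u v)
    (hvw : G.Adj v w) (huw : u ≠ w) : eWeight fV s(u, v) ≠ eWeight fV s(v, w) := by
  refine h.2.2.1 _ huv _ hvw ?_ ⟨v, Sym2.mem_mk_right u v, Sym2.mem_mk_left v w⟩
  rw [Ne, Sym2.eq_iff]
  rintro (⟨rfl, -⟩ | ⟨rfl, -⟩)
  exacts [huv.ne rfl, huw rfl]

end IsLocalTotalAntimagic

section TotalSequence

variable {n : ℕ}

def pathVertex (n i : ℕ) : Fin (n + 1) := ⟨min i n, by omega⟩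

lemma val_pathVertex {i : ℕ} (hi : i ≤ n) : (pathVertex n i).1 = i := min_eq_left hi

lemma pathGraph_adj_pathVertex {i : ℕ} (hi : i < n) :
    (pathGraph (n + 1)).Adj (pathVertex n i) (pathVertex n (i + 1)) :=
  pathGraph_adj.2 (Or.inl (by simp only [pathVertex]; omega))

/-- The weights of `v₀, v₀v₁, v₁, v₁v₂, v₂, …`, the vertices and edges of `P_(n+1)` in path
order (indices past the end are clamped to the last vertex). -/
noncomputable def pathTotalWeight (fV : Fin (n + 1) → ℕ) (fE : Sym2 (Fin (n + 1)) → ℕ)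
    (k : ℕ) : ℕ :=
  if k % 2 = 0 then vWeight (pathGraph (n + 1)) fE (pathVertex n (k / 2))
  else eWeight fV s(pathVertex n (k / 2), pathVertex n (k / 2 + 1))

variable {fV : Fin (n + 1) → ℕ} {fE : Sym2 (Fin (n + 1)) → ℕ}

lemma pathTotalWeight_two_mul (i : ℕ) :
    pathTotalWeight fV fE (2 * i) = vWeight (pathGraph (n + 1)) fE (pathVertex n i) := by
  simp [pathTotalWeight]

lemma pathTotalWeight_two_mul_add_one (i : ℕ) :
    pathTotalWeight fV fE (2 * i + 1) =
      eWeight fV s(pathVertex n i, pathVertex n (i + 1)) := by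
  simp [pathTotalWeight, show (2 * i + 1) / 2 = i by omega]

lemma pathTotalWeight_mem {k : ℕ} (hk : k < 2 * n + 1) :
    pathTotalWeight fV fE k ∈ image (vWeight (pathGraph (n + 1)) fE) univ ∪
      image (eWeight fV) (pathGraph (n + 1)).edgeFinset := by
  obtain ⟨i, rfl | rfl⟩ := Nat.even_or_odd' k
  · rw [pathTotalWeight_two_mul]
    exact mem_union_left _ (mem_image_of_mem _ (mem_univ _))
  · rw [pathTotalWeight_two_mul_add_one]
    exact mem_union_right _
      (mem_image_of_mem _ (mem_edgeFinset.2 (pathGraph_adj_pathVertex (by omega))))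

lemma IsLocalTotalAntimagic.pathTotalWeight_ne
    (h : IsLocalTotalAntimagic (pathGraph (n + 1)) fV fE) {k : ℕ} (hk : k + 2 < 2 * n + 1) :
    pathTotalWeight fV fE k ≠ pathTotalWeight fV fE (k + 1) ∧
      pathTotalWeight fV fE k ≠ pathTotalWeight fV fE (k + 2) ∧
      pathTotalWeight fV fE (k + 1) ≠ pathTotalWeight fV fE (k + 2) := by
  obtain ⟨i, rfl | rfl⟩ := Nat.even_or_odd' k
  · rw [pathTotalWeight_two_mul, pathTotalWeight_two_mul_add_one,
      show 2 * i + 2 = 2 * (i + 1) by ring, pathTotalWeight_two_mul]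
    have hi := pathGraph_adj_pathVertex (n := n) (i := i) (by omega)
    exact ⟨h.vWeight_ne_eWeight_left hi, h.2.1 _ _ hi, h.eWeight_ne_vWeight_right hi⟩
  · rw [pathTotalWeight_two_mul_add_one, show 2 * i + 1 + 1 = 2 * (i + 1) by ring,
      pathTotalWeight_two_mul, show 2 * i + 1 + 2 = 2 * (i + 1) + 1 by ring,
      pathTotalWeight_two_mul_add_one]
    have hi := pathGraph_adj_pathVertex (n := n) (i := i) (by omega)
    have hi' := pathGraph_adj_pathVertex (n := n) (i := i + 1) (by omega)
    refine ⟨h.eWeight_ne_vWeight_right hi, h.eWeight_ne_of_adj_of_adj hi hi' ?_,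
      h.vWeight_ne_eWeight_left hi'⟩
    simp only [pathVertex, ne_eq, Fin.ext_iff]
    omega

lemma IsLocalTotalAntimagic.vWeight_pathVertex_add_three
    (h : IsLocalTotalAntimagic (pathGraph (n + 1)) fV fE)
    (hcount : weightCount (pathGraph (n + 1)) fV fE ≤ 3) {i : ℕ} (hi : i + 3 ≤ n) :
    vWeight (pathGraph (n + 1)) fE (pathVertex n (i + 3)) =
      vWeight (pathGraph (n + 1)) fE (pathVertex n i) := by
  have hperiod {k : ℕ} (hk : k + 3 < 2 * n + 1) :
      pathTotalWeight fV fE (k + 3) = pathTotalWeight fV fE k :=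
    add_three_eq_of_card_le_three hcount (fun _ => pathTotalWeight_mem)
      (fun _ => h.pathTotalWeight_ne) hk
  rw [← pathTotalWeight_two_mul, ← pathTotalWeight_two_mul,
    show 2 * (i + 3) = 2 * i + 3 + 3 by ring, hperiod (by omega), hperiod (by omega)]

end TotalSequence

lemma four_le_weightCount_pathGraph {n : ℕ} (hn : 7 ≤ n) {fV : Fin n → ℕ}
    {fE : Sym2 (Fin n) → ℕ} (h : IsLocalTotalAntimagic (pathGraph n) fV fE) :
    4 ≤ weightCount (pathGraph n) fV fE := by
  obtain ⟨m, rfl⟩ : ∃ m, n = m + 1 := ⟨n - 1, by omega⟩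
  by_contra! hcount
  set W := vWeight (pathGraph (m + 1)) fE
  set g : ℕ → ℕ := fun i => fE s(pathVertex m i, pathVertex m (i + 1))
  have hW0 : W (pathVertex m 0) = g 0 :=
    vWeight_pathGraph_of_val_eq_zero fE (val_pathVertex (by omega))
      (by rw [val_pathVertex (by omega), val_pathVertex (by omega)])
  have hW {i : ℕ} (hi : i + 2 ≤ m) : W (pathVertex m (i + 1)) = g i + g (i + 1) :=
    vWeight_pathGraph_eq_add fE (by rw [val_pathVertex (by omega), val_pathVertex (by omega)])
      (by rw [val_pathVertex (by omega), val_pathVertex (by omega)])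
  have h03 : W (pathVertex m 3) = W (pathVertex m 0) :=
    h.vWeight_pathVertex_add_three (by omega) (by omega)
  have h14 : W (pathVertex m 4) = W (pathVertex m 1) :=
    h.vWeight_pathVertex_add_three (by omega) (by omega)
  have h25 : W (pathVertex m 5) = W (pathVertex m 2) :=
    h.vWeight_pathVertex_add_three (by omega) (by omega)
  rw [hW0, hW (i := 2) (by omega)] at h03
  rw [hW (i := 0) (by omega), hW (i := 3) (by omega)] at h14
  rw [hW (i := 1) (by omega), hW (i := 4) (by omega)] at h25
  simp only [Nat.reduceAdd] at h03 h14 h25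
  have hg5 : 1 ≤ g 5 := h.1.one_le (pathGraph_adj_pathVertex (by omega))
  omega

section EvenPath

variable {n : ℕ}

def evenPathVertexLabel (n i : ℕ) : ℕ := if i % 2 = 0 then n + i / 2 else 2 * n - (i + 1) / 2

def evenPathEdgeLabel (n i : ℕ) : ℕ := if i % 2 = 0 then i + 1 else n - 1 - i

def evenPathEdgeLabeling (n : ℕ) : Sym2 (Fin n) → ℕ :=
  Sym2.lift ⟨fun a b => evenPathEdgeLabel n (min a.1 b.1), fun a b => by simp only [min_comm]⟩

lemma evenPathEdgeLabeling_mk {a b : Fin n} (hab : a.1 + 1 = b.1) :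
    evenPathEdgeLabeling n s(a, b) = evenPathEdgeLabel n a.1 := by
  simp only [evenPathEdgeLabeling, Sym2.lift_mk]
  rw [min_eq_left (by omega)]

lemma eWeight_evenPathVertexLabel {a b : Fin n} (hab : a.1 + 1 = b.1) :
    eWeight (fun v : Fin n => evenPathVertexLabel n v.1) s(a, b) =
      if a.1 % 2 = 0 then 3 * n - 1 else 3 * n := by
  have hb := b.2
  simp only [eWeight, Sym2.lift_mk, evenPathVertexLabel]
  split_ifs <;> omega

lemma vWeight_evenPathEdgeLabeling (heven : Even n) (v : Fin n) :
    vWeight (pathGraph n) (evenPathEdgeLabeling n) v =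
      if v.1 = 0 then 1 else if v.1 % 2 = 1 then n - 1 else n + 1 := by
  have hv := v.2
  have := Nat.even_iff.mp heven
  by_cases h0 : v.1 = 0
  · rw [vWeight_pathGraph_of_val_eq_zero _ h0 (b := ⟨1, by omega⟩) (by simp [h0]),
      evenPathEdgeLabeling_mk (by simp [h0]), evenPathEdgeLabel]
    simp [h0]
  by_cases hlast : v.1 + 1 = n
  · rw [vWeight_pathGraph_of_val_add_one_eq _ (a := ⟨v.1 - 1, by omega⟩) (by simp; omega)
      hlast,
      evenPathEdgeLabeling_mk (by simp; omega), evenPathEdgeLabel, Fin.val_mk]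
    split_ifs <;> omega
  · rw [vWeight_pathGraph_eq_add _ (a := ⟨v.1 - 1, by omega⟩) (c := ⟨v.1 + 1, by omega⟩)
      (by simp; omega) rfl, evenPathEdgeLabeling_mk (by simp; omega),
      evenPathEdgeLabeling_mk rfl, evenPathEdgeLabel, evenPathEdgeLabel, Fin.val_mk]
    split_ifs <;> omega

lemma isTotalLabeling_evenPath (heven : Even n) :
    IsTotalLabeling (pathGraph n) (fun v => evenPathVertexLabel n v.1)
      (evenPathEdgeLabeling n) := by
  have := Nat.even_iff.mp heven
  have hedge (e : (pathGraph n).edgeSet) :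
      ∃ i, i + 1 < n ∧ evenPathEdgeLabeling n e = evenPathEdgeLabel n i := by
    obtain ⟨a, b, hab, he⟩ := mem_edgeSet_pathGraph.1 e.2
    exact ⟨a.1, by omega, he ▸ evenPathEdgeLabeling_mk hab⟩
  refine isTotalLabeling_of_injective_of_mem_Icc (Function.Injective.sumElim ?_ ?_ ?_) ?_
  · intro a b h
    have := a.2
    have := b.2
    simp only [evenPathVertexLabel] at h
    ext
    split_ifs at h <;> omega
  · rintro ⟨e, he⟩ ⟨e', he'⟩ h
    obtain ⟨a, b, hab, rfl⟩ := mem_edgeSet_pathGraph.1 he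
    obtain ⟨c, d, hcd, rfl⟩ := mem_edgeSet_pathGraph.1 he'
    simp only [evenPathEdgeLabeling_mk hab, evenPathEdgeLabeling_mk hcd, evenPathEdgeLabel] at h
    have hac : a.1 = c.1 := by split_ifs at h <;> omega
    obtain rfl : a = c := Fin.ext hac
    obtain rfl : b = d := Fin.ext (by omega)
    rfl
  · intro v e
    obtain ⟨i, hi, he⟩ := hedge e
    have := v.2
    simp only [he, evenPathVertexLabel, evenPathEdgeLabel]
    split_ifs <;> omega
  · rw [Fintype.card_fin, card_edgeFinset_pathGraph]
    rintro (v | e)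
    · have := v.2
      simp only [Sum.elim_inl, evenPathVertexLabel, Set.mem_Icc]
      split_ifs <;> omega
    · obtain ⟨i, hi, he⟩ := hedge e
      simp only [Sum.elim_inr, he, evenPathEdgeLabel, Set.mem_Icc]
      split_ifs <;> omega

lemma isLocalTotalAntimagic_evenPath (hn : 4 ≤ n) (heven : Even n) :
    IsLocalTotalAntimagic (pathGraph n) (fun v => evenPathVertexLabel n v.1)
      (evenPathEdgeLabeling n) := by
  refine ⟨isTotalLabeling_evenPath heven, fun u v huv => ?_,
    fun e₁ he₁ e₂ he₂ hne hv => ?_, fun v e he hve => ?_⟩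
  · rw [pathGraph_adj] at huv
    rw [vWeight_evenPathEdgeLabeling heven, vWeight_evenPathEdgeLabeling heven]
    split_ifs <;> omega
  · obtain ⟨a, b, hab, rfl⟩ := mem_edgeSet_pathGraph.1 he₁
    obtain ⟨c, d, hcd, rfl⟩ := mem_edgeSet_pathGraph.1 he₂
    obtain ⟨v, hv₁, hv₂⟩ := hv
    have hac : a.1 ≠ c.1 := by
      intro h
      obtain rfl := Fin.ext h
      obtain rfl : b = d := Fin.ext (by omega)
      exact hne rfl
    simp only [Sym2.mem_iff, Fin.ext_iff] at hv₁ hv₂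
    rw [eWeight_evenPathVertexLabel hab, eWeight_evenPathVertexLabel hcd]
    split_ifs <;> omega
  · obtain ⟨a, b, hab, rfl⟩ := mem_edgeSet_pathGraph.1 he
    rw [vWeight_evenPathEdgeLabeling heven, eWeight_evenPathVertexLabel hab]
    split_ifs <;> omega

lemma weightCount_evenPath_le_five (heven : Even n) :
    weightCount (pathGraph n) (fun v => evenPathVertexLabel n v.1)
      (evenPathEdgeLabeling n) ≤ 5 := by
  refine (card_le_card (t := {1, n - 1, n + 1, 3 * n - 1, 3 * n}) ?_).trans card_le_five
  intro x hx
  rcases mem_union.1 hx with hx | hx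
  · obtain ⟨v, -, rfl⟩ := mem_image.1 hx
    rw [vWeight_evenPathEdgeLabeling heven]
    split_ifs <;> simp
  · obtain ⟨e, he, rfl⟩ := mem_image.1 hx
    obtain ⟨a, b, hab, rfl⟩ := mem_edgeSet_pathGraph.1 (mem_edgeFinset.1 he)
    rw [eWeight_evenPathVertexLabel hab]
    split_ifs <;> simp

end EvenPath

/-- for every even `n ≥ 8`, `4 ≤ χ_lt(P_n) ≤ 5`. -/
theorem stmt7 (n : ℕ) (hn : 8 ≤ n) (heven : Even n) :
    4 ≤ chiLT (SimpleGraph.pathGraph n) ∧ chiLT (SimpleGraph.pathGraph n) ≤ 5 := by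
  have hLTA := isLocalTotalAntimagic_evenPath (by omega) heven
  exact ⟨le_chiLT ⟨_, _, hLTA⟩ fun _ _ h => four_le_weightCount_pathGraph (by omega) h,
    (chiLT_le_weightCount hLTA).trans (weightCount_evenPath_le_five heven)⟩

end LTA
end

section
/- The cycles C_3 and C_5 satisfy χ_lt(C_3) = 4 and χ_lt(C_5) = 4, and the cycle C_8 satisfies χ_lt(C_8) ≤ 5. -/
open scoped Classical

namespace LTA

variable {V : Type*} {W : Type*}

/-!
Read the weights around `C_n` in the order vertex `0`, edge `01`, vertex `1`, edge `12`, …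
Any three consecutive terms of this `2n`-periodic sequence are pairwise distinct (adjacent
vertices, edges sharing a vertex, a vertex and an incident edge), so if only three weights occur
the sequence is also `3`-periodic, which forces `3 ∣ n`. If moreover `n` is odd, shifting by `n`
matches each vertex with an edge of the same weight, so the vertex weights and the edge weights
have the same sum; these sums are twice the sum of the edge labels and twice the sum of the vertex
labels, whereas all labels together add up to `n (2n + 1)`, which is odd. Hence
`χ_lt(C_n) ≥ 4` whenever `6 ∤ n`; the values for `C_3`, `C_5` and the bound for `C_8` then come
from explicit labelings.
-/

open SimpleGraph Finset Function

theorem periodic_three_of_card_le_three {α : Type*} {t : ℕ → α} {T : Finset α} (hT : #T ≤ 3)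
    (ht : ∀ k, t k ∈ T) (h₁ : ∀ k, t k ≠ t (k + 1)) (h₂ : ∀ k, t k ≠ t (k + 2)) :
    Periodic t 3 := by
  intro k
  have hfill : {t k, t (k + 1), t (k + 2)} = T :=
    eq_of_subset_of_card_le (by simp [insert_subset_iff, ht])
      (hT.trans (card_eq_three.mpr ⟨_, _, _, h₁ k, h₂ k, h₁ (k + 1), rfl⟩).ge)
  have hnext := ht (k + 3)
  simp only [← hfill, mem_insert, mem_singleton] at hnext
  rcases hnext with h | h | h
  · exact h
  · exact absurd h.symm (h₂ (k + 1))
  · exact absurd h.symm (h₁ (k + 2))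

theorem sum_Icc_one_two_mul (k : ℕ) : ∑ i ∈ Icc 1 (2 * k), i = k * (2 * k + 1) := by
  induction k with
  | zero => rfl
  | succ k ih =>
    rw [show 2 * (k + 1) = 2 * k + 1 + 1 by ring, sum_Icc_succ_top (by omega),
      sum_Icc_succ_top (by omega), ih]
    ring

section Labeling

variable [Fintype V] {G : SimpleGraph V} {fV : V → ℕ} {fE : Sym2 V → ℕ}

theorem IsTotalLabeling.sum_add_sum (h : IsTotalLabeling G fV fE) :
    ∑ v, fV v + ∑ e ∈ G.edgeFinset, fE e =
      ∑ i ∈ Icc 1 (Fintype.card V + #G.edgeFinset), i := by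
  set L := Sum.elim fV fun e : G.edgeSet => fE e
  have himage : univ.image L = Icc 1 (Fintype.card V + #G.edgeFinset) :=
    coe_injective (by rw [coe_image, coe_univ, Set.image_univ, h.2, coe_Icc])
  rw [← himage, sum_image fun x _ y _ hxy => h.1 hxy, Fintype.sum_sum_type,
    sum_subtype G.edgeFinset (fun _ => mem_edgeFinset) fE]
  rfl

theorem chiLT_le (h : IsLocalTotalAntimagic G fV fE) : chiLT G ≤ weightCount G fV fE :=
  Nat.sInf_le ⟨fV, fE, h, rfl⟩

theorem chiLT_eq_of_forall_le {k : ℕ} (h : IsLocalTotalAntimagic G fV fE)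
    (hk : weightCount G fV fE = k)
    (hlow : ∀ fV fE, IsLocalTotalAntimagic G fV fE → k ≤ weightCount G fV fE) : chiLT G = k :=
  le_antisymm (hk ▸ chiLT_le h) <| le_csInf ⟨k, fV, fE, h, hk⟩ fun _ ⟨fV, fE, h, hm⟩ =>
    hm ▸ hlow fV fE h

end Labeling

section CycleGraph

variable {n : ℕ}

theorem cycleGraph_adj_add_one (i : Fin (n + 2)) : (cycleGraph (n + 2)).Adj i (i + 1) :=
  cycleGraph_adj.mpr (.inr (add_sub_cancel_left i 1))

theorem Fin.add_one_add_one_ne_self (i : Fin (n + 3)) : i + 1 + 1 ≠ i := by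
  rw [add_assoc, Ne, add_eq_left]
  simp [Fin.ext_iff, Fin.val_add, Nat.mod_eq_of_lt (show 2 < n + 3 by omega)]

theorem cycleGraph_edge_injective : Injective fun i : Fin (n + 3) => s(i, i + 1) := by
  intro i j hij
  rcases Sym2.eq_iff.mp hij with ⟨h, -⟩ | ⟨h₁, h₂⟩
  · exact h
  · exact absurd (h₁ ▸ h₂) (Fin.add_one_add_one_ne_self j)

theorem cycleGraph_mem_edgeSet {e : Sym2 (Fin (n + 3))} :
    e ∈ (cycleGraph (n + 3)).edgeSet ↔ ∃ i, s(i, i + 1) = e := by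
  refine ⟨fun he => ?_, fun ⟨i, hi⟩ => hi ▸ cycleGraph_adj_add_one i⟩
  induction e using Sym2.ind with
  | _ u v =>
    rcases cycleGraph_adj.mp he with h | h
    · exact ⟨v, by rw [Sym2.eq_swap, ← h, add_sub_cancel]⟩
    · exact ⟨u, by rw [← h, add_sub_cancel]⟩

theorem cycleGraph_edgeFinset [Fintype (cycleGraph (n + 3)).edgeSet] :
    (cycleGraph (n + 3)).edgeFinset = univ.image fun i => s(i, i + 1) := by
  ext e
  simp [cycleGraph_mem_edgeSet]

theorem vWeight_cycleGraph (fE : Sym2 (Fin (n + 3)) → ℕ) (i : Fin (n + 3)) :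
    vWeight (cycleGraph (n + 3)) fE i = fE s(i - 1, i) + fE s(i, i + 1) := by
  have hne : i - 1 ≠ i := by simp
  rw [vWeight]
  simp only [cycleGraph_edgeFinset]
  rw [sum_image fun j _ k _ h => cycleGraph_edge_injective h, Fintype.sum_eq_add _ _ hne]
  · simp
  · rintro j ⟨hj₁, hj₂⟩
    simp only [Sym2.mem_iff, ite_eq_right_iff]
    rintro (h | h)
    exacts [absurd h.symm hj₂, absurd (eq_sub_of_add_eq h.symm) hj₁]

theorem sum_edgeFinset_cycleGraph [Fintype (cycleGraph (n + 3)).edgeSet] {M : Type*}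
    [AddCommMonoid M] (f : Sym2 (Fin (n + 3)) → M) :
    ∑ e ∈ (cycleGraph (n + 3)).edgeFinset, f e = ∑ i, f s(i, i + 1) := by
  simp only [cycleGraph_edgeFinset]
  exact sum_image fun i _ j _ h => cycleGraph_edge_injective h

theorem card_edgeFinset_cycleGraph [Fintype (cycleGraph (n + 3)).edgeSet] :
    #(cycleGraph (n + 3)).edgeFinset = n + 3 := by
  simp only [cycleGraph_edgeFinset]
  rw [card_image_of_injective _ cycleGraph_edge_injective, card_univ, Fintype.card_fin]

theorem sum_vWeight_cycleGraph (fE : Sym2 (Fin (n + 3)) → ℕ) :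
    ∑ v, vWeight (cycleGraph (n + 3)) fE v = 2 * ∑ i, fE s(i, i + 1) := by
  have hshift : ∑ v : Fin (n + 3), fE s(v - 1, v) = ∑ i, fE s(i, i + 1) := by
    simpa using Equiv.sum_comp (Equiv.subRight 1) fun i => fE s(i, i + 1)
  simp only [vWeight_cycleGraph, sum_add_distrib, hshift]
  ring

theorem sum_eWeight_cycleGraph (fV : Fin (n + 3) → ℕ) :
    ∑ i, eWeight fV s(i, i + 1) = 2 * ∑ v, fV v := by
  have hshift : ∑ i : Fin (n + 3), fV (i + 1) = ∑ v, fV v :=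
    Equiv.sum_comp (Equiv.addRight 1) fV
  simp only [eWeight, Sym2.lift_mk, sum_add_distrib, hshift]
  ring

end CycleGraph

section WeightSequence

open Fin.NatCast

variable {n : ℕ} (fV : Fin (n + 3) → ℕ) (fE : Sym2 (Fin (n + 3)) → ℕ)

noncomputable def cycleWeightSeq (k : ℕ) : ℕ :=
  if Even k then vWeight (cycleGraph (n + 3)) fE (↑(k / 2))
  else eWeight fV s(↑(k / 2), ↑(k / 2) + 1)

theorem cycleWeightSeq_two_mul (i : ℕ) :
    cycleWeightSeq fV fE (2 * i) = vWeight (cycleGraph (n + 3)) fE (i : Fin (n + 3)) := by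
  simp [cycleWeightSeq]

theorem cycleWeightSeq_two_mul_add_one (i : ℕ) :
    cycleWeightSeq fV fE (2 * i + 1) = eWeight fV s((i : Fin (n + 3)), i + 1) := by
  simp [cycleWeightSeq, Nat.mul_add_div]

theorem cycleWeightSeq_two_mul_add_two (i : ℕ) :
    cycleWeightSeq fV fE (2 * i + 2) =
      vWeight (cycleGraph (n + 3)) fE ((i : Fin (n + 3)) + 1) := by
  rw [show 2 * i + 2 = 2 * (i + 1) by ring, cycleWeightSeq_two_mul, Nat.cast_succ]

theorem cycleWeightSeq_periodic : Periodic (cycleWeightSeq fV fE) (2 * (n + 3)) := by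
  intro k
  obtain ⟨i, rfl | rfl⟩ := Nat.even_or_odd' k
  · rw [← mul_add, cycleWeightSeq_two_mul, cycleWeightSeq_two_mul, Nat.cast_add,
      Fin.natCast_self, add_zero]
  · rw [add_right_comm, ← mul_add, cycleWeightSeq_two_mul_add_one,
      cycleWeightSeq_two_mul_add_one, Nat.cast_add, Fin.natCast_self, add_zero]

variable {fV fE}

theorem IsLocalTotalAntimagic.cycleWeightSeq_ne_add_one
    (h : IsLocalTotalAntimagic (cycleGraph (n + 3)) fV fE) (k : ℕ) :
    cycleWeightSeq fV fE k ≠ cycleWeightSeq fV fE (k + 1) := by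
  obtain ⟨i, rfl | rfl⟩ := Nat.even_or_odd' k
  · rw [cycleWeightSeq_two_mul, cycleWeightSeq_two_mul_add_one]
    exact h.2.2.2 _ _ (cycleGraph_adj_add_one _) (Sym2.mem_mk_left _ _)
  · rw [cycleWeightSeq_two_mul_add_one, cycleWeightSeq_two_mul_add_two]
    exact (h.2.2.2 _ _ (cycleGraph_adj_add_one _) (Sym2.mem_mk_right _ _)).symm

theorem IsLocalTotalAntimagic.cycleWeightSeq_ne_add_two
    (h : IsLocalTotalAntimagic (cycleGraph (n + 3)) fV fE) (k : ℕ) :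
    cycleWeightSeq fV fE k ≠ cycleWeightSeq fV fE (k + 2) := by
  obtain ⟨i, rfl | rfl⟩ := Nat.even_or_odd' k
  · rw [cycleWeightSeq_two_mul, cycleWeightSeq_two_mul_add_two]
    exact h.2.1 _ _ (cycleGraph_adj_add_one _)
  · rw [show 2 * i + 1 + 2 = 2 * (i + 1) + 1 by ring, cycleWeightSeq_two_mul_add_one,
      cycleWeightSeq_two_mul_add_one, Nat.cast_succ]
    exact h.2.2.1 _ (cycleGraph_adj_add_one _) _ (cycleGraph_adj_add_one _)
      (cycleGraph_edge_injective.ne (cycleGraph_adj_add_one _).ne)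
      ⟨_, Sym2.mem_mk_right _ _, Sym2.mem_mk_left _ _⟩

theorem IsLocalTotalAntimagic.cycleWeightSeq_periodic_three
    (h : IsLocalTotalAntimagic (cycleGraph (n + 3)) fV fE)
    (hc : weightCount (cycleGraph (n + 3)) fV fE ≤ 3) : Periodic (cycleWeightSeq fV fE) 3 := by
  refine periodic_three_of_card_le_three hc (fun k => ?_) h.cycleWeightSeq_ne_add_one
    h.cycleWeightSeq_ne_add_two
  obtain ⟨i, rfl | rfl⟩ := Nat.even_or_odd' k
  · rw [cycleWeightSeq_two_mul]
    exact mem_union_left _ (mem_image_of_mem _ (mem_univ _))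
  · rw [cycleWeightSeq_two_mul_add_one]
    exact mem_union_right _ (mem_image_of_mem _ (by simpa using cycleGraph_adj_add_one _))

theorem IsLocalTotalAntimagic.three_dvd_of_weightCount_le_three
    (h : IsLocalTotalAntimagic (cycleGraph (n + 3)) fV fE)
    (hc : weightCount (cycleGraph (n + 3)) fV fE ≤ 3) : 3 ∣ n + 3 := by
  by_contra h3
  have hseq : cycleWeightSeq fV fE 0 = cycleWeightSeq fV fE (2 * (n + 3) % 3) := by
    rw [(h.cycleWeightSeq_periodic_three hc).map_mod_nat, ← zero_add (2 * (n + 3)),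
      cycleWeightSeq_periodic]
  rcases (by omega : 2 * (n + 3) % 3 = 1 ∨ 2 * (n + 3) % 3 = 2) with hr | hr
  · rw [hr] at hseq
    exact h.cycleWeightSeq_ne_add_one 0 hseq
  · rw [hr] at hseq
    exact h.cycleWeightSeq_ne_add_two 0 hseq

theorem IsLocalTotalAntimagic.even_of_weightCount_le_three
    (h : IsLocalTotalAntimagic (cycleGraph (n + 3)) fV fE)
    (hc : weightCount (cycleGraph (n + 3)) fV fE ≤ 3) : Even (n + 3) := by
  by_contra hodd
  obtain ⟨c, hn⟩ := Nat.not_even_iff_odd.mp hodd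
  have hperiod : Periodic (cycleWeightSeq fV fE) (n + 3) := by
    obtain ⟨k, hk⟩ := h.three_dvd_of_weightCount_le_three hc
    rw [hk, mul_comm]
    exact (h.cycleWeightSeq_periodic_three hc).nat_mul k
  have hopposite (v : Fin (n + 3)) :
      vWeight (cycleGraph (n + 3)) fE v = eWeight fV s(v + c, v + c + 1) := by
    have := hperiod (2 * v.val)
    rw [show 2 * v.val + (n + 3) = 2 * (v.val + c) + 1 by omega,
      cycleWeightSeq_two_mul_add_one, cycleWeightSeq_two_mul] at this
    simpa using this.symm
  have hshift :
      ∑ v : Fin (n + 3), eWeight fV s(v + c, v + c + 1) = ∑ v, eWeight fV s(v, v + 1) :=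
    Equiv.sum_comp (Equiv.addRight (c : Fin (n + 3))) fun v => eWeight fV s(v, v + 1)
  have hweights := sum_vWeight_cycleGraph fE
  simp only [hopposite, hshift, sum_eWeight_cycleGraph] at hweights
  have htotal := h.1.sum_add_sum
  simp only [sum_edgeFinset_cycleGraph, card_edgeFinset_cycleGraph, Fintype.card_fin,
    ← two_mul, sum_Icc_one_two_mul] at htotal
  have heven : Even ((n + 3) * (2 * (n + 3) + 1)) := ⟨∑ v, fV v, by omega⟩
  rcases Nat.even_mul.mp heven with h | h
  · exact hodd h
  · exact Nat.not_even_two_mul_add_one _ h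

theorem IsLocalTotalAntimagic.four_le_weightCount_cycleGraph
    (h : IsLocalTotalAntimagic (cycleGraph (n + 3)) fV fE) (h6 : ¬ 6 ∣ n + 3) :
    4 ≤ weightCount (cycleGraph (n + 3)) fV fE := by
  by_contra! hc
  replace hc : weightCount (cycleGraph (n + 3)) fV fE ≤ 3 := by omega
  exact h6 (Nat.Coprime.mul_dvd_of_dvd_of_dvd (by norm_num)
    (h.even_of_weightCount_le_three hc).two_dvd (h.three_dvd_of_weightCount_le_three hc))

end WeightSequence

section CycleLabeling

variable {n : ℕ}

def cycleEdgeLabel (b : Fin (n + 3) → ℕ) (e : Sym2 (Fin (n + 3))) : ℕ :=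
  ∑ i, if e = s(i, i + 1) then b i else 0

theorem cycleEdgeLabel_apply (b : Fin (n + 3) → ℕ) (i : Fin (n + 3)) :
    cycleEdgeLabel b s(i, i + 1) = b i := by
  simp [cycleEdgeLabel, cycleGraph_edge_injective.eq_iff]

theorem vWeight_cycleEdgeLabel (b : Fin (n + 3) → ℕ) :
    vWeight (cycleGraph (n + 3)) (cycleEdgeLabel b) = fun i => b (i - 1) + b i := by
  funext i
  have hprev := cycleEdgeLabel_apply b (i - 1)
  rw [sub_add_cancel] at hprev
  rw [vWeight_cycleGraph, hprev, cycleEdgeLabel_apply]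

variable {a b : Fin (n + 3) → ℕ}

theorem isTotalLabeling_cycleGraph (hinj : Injective (Sum.elim a b))
    (hrange : univ.image (Sum.elim a b) = Icc 1 (2 * (n + 3))) :
    IsTotalLabeling (cycleGraph (n + 3)) a (cycleEdgeLabel b) := by
  let g : Fin (n + 3) ⊕ Fin (n + 3) → Fin (n + 3) ⊕ (cycleGraph (n + 3)).edgeSet :=
    Sum.map id fun i => ⟨s(i, i + 1), cycleGraph_adj_add_one i⟩
  have hg : Surjective g := Sum.map_surjective.mpr ⟨surjective_id, fun ⟨e, he⟩ => by
    obtain ⟨i, rfl⟩ := cycleGraph_mem_edgeSet.mp he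
    exact ⟨i, rfl⟩⟩
  have hcomp : Sum.elim a (fun e : (cycleGraph (n + 3)).edgeSet => cycleEdgeLabel b e) ∘ g =
      Sum.elim a b := by
    funext x
    rcases x with i | i
    · rfl
    · exact cycleEdgeLabel_apply b i
  refine ⟨Injective.of_comp_right (hcomp ▸ hinj) hg, ?_⟩
  simp only [card_edgeFinset_cycleGraph, Fintype.card_fin, ← two_mul]
  rw [← hg.range_comp, hcomp, ← coe_Icc, ← hrange, coe_image, coe_univ, Set.image_univ]

theorem isLocalTotalAntimagic_cycleGraph (hinj : Injective (Sum.elim a b))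
    (hrange : univ.image (Sum.elim a b) = Icc 1 (2 * (n + 3)))
    (hv : ∀ i, b (i - 1) + b i ≠ b i + b (i + 1))
    (he : ∀ i, a i + a (i + 1) ≠ a (i + 1) + a (i + 1 + 1))
    (hve : ∀ i, b (i - 1) + b i ≠ a i + a (i + 1) ∧ b i + b (i + 1) ≠ a i + a (i + 1)) :
    IsLocalTotalAntimagic (cycleGraph (n + 3)) a (cycleEdgeLabel b) := by
  refine ⟨isTotalLabeling_cycleGraph hinj hrange, fun u v huv => ?_, ?_, ?_⟩
  · rw [vWeight_cycleEdgeLabel]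
    rcases cycleGraph_adj.mp huv with h | h
    · obtain rfl := sub_eq_iff_eq_add'.mp h
      simpa only [add_sub_cancel_right] using (hv v).symm
    · obtain rfl := sub_eq_iff_eq_add'.mp h
      simpa only [add_sub_cancel_right] using hv u
  · rintro _ he₁ _ he₂ hne ⟨w, hw₁, hw₂⟩
    obtain ⟨i, rfl⟩ := cycleGraph_mem_edgeSet.mp he₁
    obtain ⟨j, rfl⟩ := cycleGraph_mem_edgeSet.mp he₂
    have hij : i ≠ j := fun h => hne (h ▸ rfl)
    simp only [eWeight, Sym2.lift_mk]
    rw [Sym2.mem_iff] at hw₁ hw₂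
    rcases hw₁ with rfl | rfl <;> rcases hw₂ with h | h
    · exact absurd h hij
    · subst h
      exact (he j).symm
    · subst h
      exact he _
    · exact absurd (add_right_cancel h) hij
  · rintro v _ he hv
    obtain ⟨i, rfl⟩ := cycleGraph_mem_edgeSet.mp he
    rw [vWeight_cycleEdgeLabel]
    rcases Sym2.mem_iff.mp hv with rfl | rfl
    · exact (hve v).1
    · simpa only [add_sub_cancel_right, eWeight, Sym2.lift_mk] using (hve i).2

theorem weightCount_cycleGraph :
    weightCount (cycleGraph (n + 3)) a (cycleEdgeLabel b) =
      #(univ.image (fun i => b (i - 1) + b i) ∪ univ.image fun i => a i + a (i + 1)) := by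
  rw [weightCount, vWeight_cycleEdgeLabel]
  simp only [cycleGraph_edgeFinset, image_image]
  rfl

end CycleLabeling

theorem chiLT_cycleGraph_three : chiLT (cycleGraph 3) = 4 :=
  chiLT_eq_of_forall_le
    (isLocalTotalAntimagic_cycleGraph (n := 0) (a := ![2, 5, 3]) (b := ![4, 1, 6])
      (by decide) (by decide) (by decide) (by decide) (by decide))
    (by rw [weightCount_cycleGraph]; decide)
    fun _ _ h => h.four_le_weightCount_cycleGraph (by decide)

theorem chiLT_cycleGraph_five : chiLT (cycleGraph 5) = 4 :=
  chiLT_eq_of_forall_le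
    (isLocalTotalAntimagic_cycleGraph (n := 2) (a := ![2, 6, 8, 1, 7]) (b := ![10, 3, 5, 9, 4])
      (by decide) (by decide) (by decide) (by decide) (by decide))
    (by rw [weightCount_cycleGraph]; decide)
    fun _ _ h => h.four_le_weightCount_cycleGraph (by decide)

theorem chiLT_cycleGraph_eight_le : chiLT (cycleGraph 8) ≤ 5 :=
  (chiLT_le (isLocalTotalAntimagic_cycleGraph (n := 5) (a := ![6, 11, 9, 7, 10, 4, 12, 8])
    (b := ![2, 16, 1, 13, 5, 15, 3, 14])
    (by decide) (by decide) (by decide) (by decide) (by decide))).trans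
    (by rw [weightCount_cycleGraph]; decide)

/-- `χ_lt(C₃) = 4`, `χ_lt(C₅) = 4` and `χ_lt(C₈) ≤ 5`. -/
theorem stmt12 :
    chiLT (SimpleGraph.cycleGraph 3) = 4 ∧ chiLT (SimpleGraph.cycleGraph 5) = 4 ∧
      chiLT (SimpleGraph.cycleGraph 8) ≤ 5 :=
  ⟨chiLT_cycleGraph_three, chiLT_cycleGraph_five, chiLT_cycleGraph_eight_le⟩

end LTA
end
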